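/- If W is a trapezoidal word, then for every 0 ≤ n ≤ |W| there is at most one right special factor of W of length n. -/

import Mathlib

open List

variable {α : Type*} [DecidableEq α]

/-- The set of factors (contiguous subwords) of `W`. -/
def factorFinset (W : List α) : Finset (List α) := (W.inits.flatMap List.tails).toFinset

/-- A palindrome is a word equal to its reversal. -/
def Pal (u : List α) : Prop := u.reverse = u

instance : DecidablePred (Pal : List α → Prop) :=
  fun u => inferInstanceAs (Decidable (u.reverse = u))

/-- The set of palindromic factors of `W` (including the empty word). -/
def palFactorFinset (W : List α) : Finset (List α) := (factorFinset W).filter Pal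

/-- Subword complexity: the number of distinct factors of `W` of length `n`. -/
def C (W : List α) (n : ℕ) : ℕ := ((factorFinset W).filter (fun u => u.length = n)).card

/-- Palindromic complexity: number of distinct palindromic factors of `W` of length `n`. -/
def P (W : List α) (n : ℕ) : ℕ := ((palFactorFinset W).filter (fun u => u.length = n)).card

/-- A word is rich if it has exactly `|W| + 1` distinct palindromic factors. -/
def Rich (W : List α) : Prop := (palFactorFinset W).card = W.length + 1

/-- Number of occurrences of `u` as a factor of `W`. -/
def occ (u W : List α) : ℕ := ((List.range (W.length + 1)).filter (fun i => u <+: W.drop i)).length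

/-- `Z` is a complete return to `u` in `W`: a factor of `W` with exactly two
occurrences of `u`, one as a prefix and one as a suffix. -/
def CompleteReturn (u Z W : List α) : Prop := Z <:+: W ∧ u <+: Z ∧ u <:+ Z ∧ occ u Z = 2

/-- `u` is a right special factor of `W`. -/
def RightSpecial (u W : List α) : Prop :=
  ∃ x y : α, x ≠ y ∧ (u ++ [x]) <:+: W ∧ (u ++ [y]) <:+: W

/-- `R_W`: the smallest `p` such that `W` has no right special factor of length `p`. -/
noncomputable def RW (W : List α) : ℕ := sInf {p : ℕ | ∀ u : List α, u.length = p → ¬ RightSpecial u W}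

/-- `K_W`: the length of the shortest suffix of `W` occurring exactly once in `W`. -/
noncomputable def KW (W : List α) : ℕ := sInf {k : ℕ | ∃ u : List α, u <:+ W ∧ u.length = k ∧ occ u W = 1}

/-- A word is trapezoidal if `|W| = R_W + K_W`. -/
def Trapezoidal (W : List α) : Prop := W.length = RW W + KW W

/-- The minimal period of `W`. -/
noncomputable def minPeriod (W : List α) : ℕ :=
  sInf {q : ℕ | 0 < q ∧ ∀ i : ℕ, i + q < W.length → W[i]? = W[i + q]?}

/-- A binary word is balanced if the number of occurrences of a letter in two
factors of equal length differ by at most 1. -/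
def BalancedWord (W : List Bool) : Prop :=
  ∀ u v : List Bool, u <:+: W → v <:+: W → u.length = v.length →
    u.count true ≤ v.count true + 1

/-!
Let `s n` be the number of right special factors of length `n`. A factor of length `n` has at
least one right extension, except for the suffix of that length when it occurs only once (which
forces `K_W ≤ n`), and at least two if it is right special. Hence
`C (n + 1) ≥ C n + s n - [K_W ≤ n]`, and telescoping from `C 0 = 1` to `C |W| = 1` gives
`∑ n < |W|, s n ≤ |W| - K_W = R_W`. As `s n ≥ 1` for all `n < R_W`, no `s n` can reach `2`.
-/

open scoped Finset

open Finset in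
lemma Finset.add_one_le_sum_range {f : ℕ → ℕ} {r m n : ℕ} (hr : r ≤ m) (hn : n < m)
    (hpos : ∀ k < r, 1 ≤ f k) (htwo : 2 ≤ f n) : r + 1 ≤ ∑ k ∈ range m, f k := by
  have hfilter : (range m).filter (· < r) = range r := by
    ext k
    simp only [mem_filter, mem_range]
    omega
  calc r + 1 = ∑ k ∈ range m, ((if k < r then 1 else 0) + if k = n then 1 else 0) := by
        rw [sum_add_distrib, sum_boole, hfilter, sum_ite_eq', if_pos (mem_range.mpr hn)]
        simp
    _ ≤ ∑ k ∈ range m, f k := by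
        refine sum_le_sum fun k _ => ?_
        rcases eq_or_ne k n with rfl | hkn
        · split_ifs <;> omega
        · have := hpos k
          split_ifs <;> omega

lemma mem_factorFinset {u W : List α} : u ∈ factorFinset W ↔ u <:+: W := by
  simp only [factorFinset, List.mem_toFinset, List.mem_flatMap, List.mem_inits, List.mem_tails]
  constructor
  · rintro ⟨s, hs, hu⟩
    exact hu.isInfix.trans hs.isInfix
  · rintro ⟨s, t, rfl⟩
    exact ⟨s ++ u, ⟨t, by rw [List.append_assoc]⟩, suffix_append s u⟩

lemma occ_eq_card (u W : List α) :
    occ u W = #{i ∈ Finset.range (W.length + 1) | u <+: W.drop i} :=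
  rfl

def RightExtendable (u W : List α) : Prop := ∃ x : α, u ++ [x] <:+: W

omit [DecidableEq α] in
lemma RightSpecial.rightExtendable {u W : List α} (h : RightSpecial u W) : RightExtendable u W :=
  let ⟨x, _, _, hx, _⟩ := h
  ⟨x, hx⟩

omit [DecidableEq α] in
lemma RightExtendable.isInfix {u W : List α} (h : RightExtendable u W) : u <:+: W :=
  let ⟨_, hx⟩ := h
  (List.prefix_append u _).isInfix.trans hx

omit [DecidableEq α] in
lemma RightSpecial.length_lt {u W : List α} (h : RightSpecial u W) : u.length < W.length := by
  obtain ⟨x, _, _, hx, _⟩ := h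
  simpa using hx.length_le

omit [DecidableEq α] in
lemma rightExtendable_of_prefix_drop {u W : List α} {i : ℕ} (h : u <+: W.drop i)
    (hlt : i + u.length < W.length) : RightExtendable u W := by
  obtain ⟨_ | ⟨x, r⟩, hr⟩ := h
  · have := congrArg List.length hr
    simp only [List.append_nil, List.length_drop] at this
    omega
  · refine ⟨x, ⟨W.take i, r, ?_⟩⟩
    rw [List.append_assoc, List.append_assoc, List.singleton_append, hr, List.take_append_drop]

omit [DecidableEq α] in
lemma List.IsInfix.isSuffix_of_not_rightExtendable {u W : List α} (hu : u <:+: W)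
    (hext : ¬ RightExtendable u W) : u <:+ W := by
  obtain ⟨s, _ | ⟨x, t⟩, hst⟩ := hu
  · exact ⟨s, by simpa using hst⟩
  · exact absurd ⟨x, s, t, by simpa using hst⟩ hext

/-- A factor without right extension can only occur at the very end of `W`. -/
lemma occ_eq_one_of_not_rightExtendable {u W : List α} (hu : u <:+: W)
    (hext : ¬ RightExtendable u W) : occ u W = 1 := by
  have hsuf := List.suffix_iff_eq_drop.mp (hu.isSuffix_of_not_rightExtendable hext)
  rw [occ_eq_card, Finset.card_eq_one]
  refine ⟨W.length - u.length, Finset.ext fun i => ?_⟩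
  simp only [Finset.mem_filter, Finset.mem_range, Finset.mem_singleton]
  constructor
  · rintro ⟨hiW, hi⟩
    have hle : u.length ≤ (W.drop i).length := hi.length_le
    rw [List.length_drop] at hle
    by_contra hne
    exact hext (rightExtendable_of_prefix_drop hi (by omega))
  · rintro rfl
    exact ⟨by omega, hsuf ▸ List.prefix_refl u⟩

lemma KW_le_of_not_rightExtendable {u W : List α} (hu : u <:+: W)
    (hext : ¬ RightExtendable u W) : KW W ≤ u.length :=
  Nat.sInf_le ⟨u, hu.isSuffix_of_not_rightExtendable hext, rfl,
    occ_eq_one_of_not_rightExtendable hu hext⟩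

def factorsOfLength (W : List α) (n : ℕ) : Finset (List α) :=
  (factorFinset W).filter (·.length = n)

lemma C_eq_card (W : List α) (n : ℕ) : C W n = #(factorsOfLength W n) :=
  rfl

lemma mem_factorsOfLength {u W : List α} {n : ℕ} :
    u ∈ factorsOfLength W n ↔ u <:+: W ∧ u.length = n := by
  simp [factorsOfLength, mem_factorFinset]

lemma C_zero (W : List α) : C W 0 = 1 := by
  rw [C_eq_card, Finset.card_eq_one]
  refine ⟨[], Finset.ext fun u => ?_⟩
  rw [mem_factorsOfLength, Finset.mem_singleton, List.length_eq_zero_iff]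
  exact ⟨And.right, by rintro rfl; exact ⟨nil_infix, rfl⟩⟩

lemma C_length (W : List α) : C W W.length = 1 := by
  rw [C_eq_card, Finset.card_eq_one]
  refine ⟨W, Finset.ext fun u => ?_⟩
  simp only [mem_factorsOfLength, Finset.mem_singleton]
  exact ⟨fun h => h.1.sublist.eq_of_length h.2, by rintro rfl; exact ⟨infix_refl u, rfl⟩⟩

open scoped Classical in
noncomputable def rightSpecialFactors (W : List α) (n : ℕ) : Finset (List α) :=
  (factorsOfLength W n).filter (RightSpecial · W)

open scoped Classical in
noncomputable def nonRightExtendableFactors (W : List α) (n : ℕ) : Finset (List α) :=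
  (factorsOfLength W n).filter (¬ RightExtendable · W)

lemma mem_rightSpecialFactors {u W : List α} (h : RightSpecial u W) :
    u ∈ rightSpecialFactors W u.length := by
  classical
  exact Finset.mem_filter.mpr ⟨mem_factorsOfLength.mpr ⟨h.rightExtendable.isInfix, rfl⟩, h⟩

lemma one_le_card_rightSpecialFactors {W : List α} {n : ℕ} (hn : n < RW W) :
    1 ≤ #(rightSpecialFactors W n) := by
  have := Nat.notMem_of_lt_sInf hn
  simp only [Set.mem_ofPred_eq, not_forall, not_not] at this
  obtain ⟨u, rfl, hu⟩ := this
  exact Finset.card_pos.mpr ⟨u, mem_rightSpecialFactors hu⟩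

lemma card_nonRightExtendableFactors_le_one (W : List α) (n : ℕ) :
    #(nonRightExtendableFactors W n) ≤ 1 := by
  classical
  refine Finset.card_le_one.mpr fun u hu v hv => ?_
  simp only [nonRightExtendableFactors, Finset.mem_filter, mem_factorsOfLength] at hu hv
  rw [List.suffix_iff_eq_drop.mp (hu.1.1.isSuffix_of_not_rightExtendable hu.2),
    List.suffix_iff_eq_drop.mp (hv.1.1.isSuffix_of_not_rightExtendable hv.2), hu.1.2, hv.1.2]

lemma nonRightExtendableFactors_eq_empty {W : List α} {n : ℕ} (hn : n < KW W) :
    nonRightExtendableFactors W n = ∅ := by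
  classical
  refine Finset.eq_empty_of_forall_notMem fun u hu => ?_
  simp only [nonRightExtendableFactors, Finset.mem_filter, mem_factorsOfLength] at hu
  have := KW_le_of_not_rightExtendable hu.1.1 hu.2
  omega

lemma C_succ_eq_sum_card_fiber (W : List α) (n : ℕ) :
    C W (n + 1) = ∑ u ∈ factorsOfLength W n,
      #{v ∈ factorsOfLength W (n + 1) | v.take n = u} := by
  refine C_eq_card W (n + 1) ▸ Finset.card_eq_sum_card_fiberwise fun v hv => ?_
  rw [Finset.mem_coe, mem_factorsOfLength] at hv ⊢
  exact ⟨(List.take_prefix n v).isInfix.trans hv.1, by simp [hv.2]⟩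

lemma append_singleton_mem_fiber {u W : List α} {x : α} (hx : u ++ [x] <:+: W) :
    u ++ [x] ∈ {v ∈ factorsOfLength W (u.length + 1) | v.take u.length = u} := by
  simp [mem_factorsOfLength, hx]

lemma one_add_ite_le_card_fiber {W u : List α} [Decidable (RightSpecial u W)]
    [Decidable (RightExtendable u W)] :
    1 + (if RightSpecial u W then 1 else 0) ≤
      #{v ∈ factorsOfLength W (u.length + 1) | v.take u.length = u} +
        if ¬ RightExtendable u W then 1 else 0 := by
  by_cases hs : RightSpecial u W
  · obtain ⟨x, y, hxy, hx, hy⟩ := id hs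
    have := Finset.one_lt_card.mpr ⟨_, append_singleton_mem_fiber hx, _,
      append_singleton_mem_fiber hy, by simpa using hxy⟩
    rw [if_pos hs]
    omega
  · by_cases he : RightExtendable u W
    · obtain ⟨x, hx⟩ := id he
      have := Finset.card_pos.mpr ⟨_, append_singleton_mem_fiber hx⟩
      rw [if_neg hs, if_neg (not_not.mpr he)]
      omega
    · rw [if_neg hs, if_pos he]
      omega

lemma C_add_card_rightSpecialFactors_le (W : List α) (n : ℕ) :
    C W n + #(rightSpecialFactors W n) ≤ C W (n + 1) + #(nonRightExtendableFactors W n) := by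
  classical
  rw [C_succ_eq_sum_card_fiber, C_eq_card, rightSpecialFactors, nonRightExtendableFactors,
    Finset.card_filter, Finset.card_filter, Finset.card_eq_sum_ones, ← Finset.sum_add_distrib,
    ← Finset.sum_add_distrib]
  refine Finset.sum_le_sum fun u hu => ?_
  obtain rfl := (mem_factorsOfLength.mp hu).2
  convert one_add_ite_le_card_fiber (W := W) (u := u)

lemma one_add_sum_card_rightSpecialFactors_le (W : List α) (m : ℕ) :
    1 + ∑ n ∈ Finset.range m, #(rightSpecialFactors W n) ≤ C W m + (m - KW W) := by
  induction m with
  | zero => simp [C_zero]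
  | succ m ih =>
    rw [Finset.sum_range_succ]
    have hstep := C_add_card_rightSpecialFactors_le W m
    have hone := card_nonRightExtendableFactors_le_one W m
    rcases Nat.lt_or_ge m (KW W) with hm | hm
    · rw [nonRightExtendableFactors_eq_empty hm, Finset.card_empty] at hstep
      omega
    · omega

theorem stmt16 {α : Type*} [DecidableEq α] (W : List α) (h : Trapezoidal W) :
    ∀ n : ℕ, n ≤ W.length → ∀ u v : List α,
      RightSpecial u W → RightSpecial v W → u.length = n → v.length = n → u = v := by
  intro n _ u v hu hv hlu hlv
  by_contra hne
  have hlen : W.length = RW W + KW W := h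
  have hupper := one_add_sum_card_rightSpecialFactors_le W W.length
  rw [C_length] at hupper
  have htwo : 2 ≤ #(rightSpecialFactors W n) := Finset.one_lt_card.mpr
    ⟨u, hlu ▸ mem_rightSpecialFactors hu, v, hlv ▸ mem_rightSpecialFactors hv, hne⟩
  have hlower := Finset.add_one_le_sum_range (m := W.length) (by omega) (hlu ▸ hu.length_lt)
    (fun _ => one_le_card_rightSpecialFactors) htwo
  omega
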